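/- arXiv:1207.3581 — 10 statements merged into one kernel-verified Lean document; each statement's English description precedes it below -/
import Mathlib

section
/- If D = ((ℓ,n), g₀, (a,b); (k₁,n₁),…,(k_m,n_m)) is an SP data set of genus g with gcd(ℓ,n) = 1, then n ≤ 2g + 1. -/
/-- An SP data set of genus g with gcd(ℓ,n) = 1 satisfies n ≤ 2g + 1. -/
theorem sp_coprime_upper_bound
    (ℓ n g₀ a b g m : ℕ) (k nn : Fin m → ℕ)
    (hn : 1 < n) (hℓ : 1 ≤ ℓ) (hℓn : ℓ < n) (hm : 1 ≤ m)
    (hnn : ∀ i, 1 < nn i ∧ nn i ∣ n)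
    (ha : Nat.gcd a n = 1) (hb : Nat.gcd b n = 1)
    (hk : ∀ i, Nat.gcd (k i) (nn i) = 1)
    (h3 : a + b ≡ ℓ * a * b [MOD n])
    (h4 : a + b + ∑ i, (n / nn i) * k i ≡ 0 [MOD n])
    (hgenus : 2 * g = 2 * g₀ * n + ∑ i, (n / nn i) * (nn i - 1))
    (hcop : Nat.gcd ℓ n = 1) :
    n ≤ 2 * g + 1 := by
  rcases Nat.lt_or_ge m 2 with hm2 | hm2
  · -- m = 1
    have hm1 : m = 1 := by omega
    subst hm1
    obtain ⟨h1, h2⟩ := hnn 0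
    have hsum : ∑ i : Fin 1, (n / nn i) * k i = (n / nn 0) * k 0 := by
      simp [Fin.sum_univ_one]
    rw [hsum] at h4
    have hdn : n / nn 0 ∣ n := Nat.div_dvd_of_dvd h2
    have hmod : (ℓ * a * b + (n / nn 0) * k 0) ≡ 0 [MOD n] :=
      (Nat.ModEq.add_right _ h3.symm).trans h4
    have hndvd : n ∣ ℓ * a * b + (n / nn 0) * k 0 :=
      (Nat.modEq_zero_iff_dvd).mp hmod
    have hdab : n / nn 0 ∣ ℓ * a * b :=
      (Nat.dvd_add_iff_left (dvd_mul_right (n / nn 0) (k 0))).mpr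
        (hdn.trans hndvd)
    have hcop' : Nat.Coprime (ℓ * a * b) n := (Nat.Coprime.mul hcop ha).mul hb
    have hd1 : n / nn 0 = 1 := by
      have := Nat.dvd_gcd hdab hdn
      rw [hcop'] at this
      exact Nat.dvd_one.mp this
    have hnn0 : nn 0 = n := by
      have h := Nat.div_mul_cancel h2
      rw [hd1, one_mul] at h
      exact h
    have hgs : ∑ i : Fin 1, (n / nn i) * (nn i - 1) = n - 1 := by
      rw [Fin.sum_univ_one, hnn0, Nat.div_self (by omega)]; ring
    rw [hgs] at hgenus
    set X := 2 * g₀ * n with hX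
    omega
  · -- m ≥ 2
    have key : ∀ i : Fin m, n ≤ 2 * ((n / nn i) * (nn i - 1)) := by
      intro i
      obtain ⟨h1, h2⟩ := hnn i
      obtain ⟨c, hc⟩ := h2
      have hpos : 0 < nn i := by omega
      rw [hc, Nat.mul_div_cancel_left _ hpos]
      have hle : nn i ≤ 2 * (nn i - 1) := by omega
      nlinarith
    have hsum : m * n ≤ 2 * ∑ i, (n / nn i) * (nn i - 1) := by
      calc m * n = ∑ _i : Fin m, n := by simp [Finset.sum_const, mul_comm]
        _ ≤ ∑ i, 2 * ((n / nn i) * (nn i - 1)) :=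
            Finset.sum_le_sum (fun i _ => key i)
        _ = 2 * ∑ i, (n / nn i) * (nn i - 1) := (Finset.mul_sum _ _ _).symm
    have h2n : 2 * n ≤ m * n := Nat.mul_le_mul_right n hm2
    set S := ∑ i, (n / nn i) * (nn i - 1) with hS
    set X := 2 * g₀ * n with hX
    omega
end

section
/- If D is an SP data set of exponent ℓ⁄n and genus g with gcd(ℓ,n) = 1, then the tuple D' obtained by replacing ℓ with 1 and replacing a, b, k₁,…,k_m by ℓa, ℓb, ℓk₁,…,ℓk_m (reduced modulo n and the respective nᵢ) is an SP data set of exponent 1⁄n and genus g. -/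
/-- If D is an SP data set of exponent ℓ⁄n and genus g with gcd(ℓ,n) = 1, then
replacing ℓ by 1 and a, b, kᵢ by ℓa, ℓb, ℓkᵢ (reduced mod n resp. nᵢ) yields an SP data
set of exponent 1⁄n and genus g. -/
theorem sp_coprime_power_of_root
    (ℓ n g₀ a b g m : ℕ) (k nn : Fin m → ℕ)
    (hn : 1 < n)
    (hnn : ∀ i, 1 < nn i ∧ nn i ∣ n)
    (ha : Nat.gcd a n = 1) (hb : Nat.gcd b n = 1)
    (hk : ∀ i, Nat.gcd (k i) (nn i) = 1)
    (h3 : a + b ≡ ℓ * a * b [MOD n])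
    (h4 : a + b + ∑ i, (n / nn i) * k i ≡ 0 [MOD n])
    (hgenus : 2 * g = 2 * g₀ * n + ∑ i, (n / nn i) * (nn i - 1))
    (hcop : Nat.gcd ℓ n = 1) :
    Nat.gcd (ℓ * a % n) n = 1 ∧ Nat.gcd (ℓ * b % n) n = 1 ∧
    (∀ i, Nat.gcd (ℓ * k i % nn i) (nn i) = 1) ∧
    (ℓ * a % n) + (ℓ * b % n) ≡ 1 * (ℓ * a % n) * (ℓ * b % n) [MOD n] ∧
    (ℓ * a % n) + (ℓ * b % n) + ∑ i, (n / nn i) * (ℓ * k i % nn i) ≡ 0 [MOD n] ∧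
    2 * g = 2 * g₀ * n + ∑ i, (n / nn i) * (nn i - 1) := by
  have hga : Nat.gcd (ℓ * a % n) n = 1 := by
    rw [← Nat.gcd_rec, Nat.gcd_comm]
    exact Nat.Coprime.mul hcop ha
  have hgb : Nat.gcd (ℓ * b % n) n = 1 := by
    rw [← Nat.gcd_rec, Nat.gcd_comm]
    exact Nat.Coprime.mul hcop hb
  have hgk : ∀ i, Nat.gcd (ℓ * k i % nn i) (nn i) = 1 := by
    intro i
    rw [← Nat.gcd_rec, Nat.gcd_comm]
    exact Nat.Coprime.mul (Nat.Coprime.coprime_dvd_right (hnn i).2 hcop) (hk i)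
  have modA := Nat.mod_modEq (ℓ * a) n
  have modB := Nat.mod_modEq (ℓ * b) n
  have h3' : ℓ * a + ℓ * b ≡ 1 * (ℓ * a) * (ℓ * b) [MOD n] := by
    have h := h3.mul_left ℓ
    have e1 : ℓ * (a + b) = ℓ * a + ℓ * b := by ring
    have e2 : ℓ * (ℓ * a * b) = 1 * (ℓ * a) * (ℓ * b) := by ring
    rwa [e1, e2] at h
  have hterm : ∀ i, (n / nn i) * (ℓ * k i % nn i) ≡ (n / nn i) * (ℓ * k i) [MOD n] := by
    intro i
    have h := (Nat.mod_modEq (ℓ * k i) (nn i)).mul_left' (n / nn i)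
    rwa [Nat.div_mul_cancel (hnn i).2] at h
  have hsum : (∑ i, (n / nn i) * (ℓ * k i % nn i)) ≡ ∑ i, (n / nn i) * (ℓ * k i) [MOD n] := by
    rw [← ZMod.natCast_eq_natCast_iff]
    push_cast
    exact Finset.sum_congr rfl fun i _ => by
      exact_mod_cast (ZMod.natCast_eq_natCast_iff _ _ _).2 (hterm i)
  have h4' : ℓ * a + ℓ * b + ∑ i, (n / nn i) * (ℓ * k i) ≡ 0 [MOD n] := by
    have h := h4.mul_left ℓ
    have e1 : ℓ * (a + b + ∑ i, (n / nn i) * k i)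
        = ℓ * a + ℓ * b + ∑ i, (n / nn i) * (ℓ * k i) := by
      rw [mul_add, mul_add, Finset.mul_sum]
      congr 1
      exact Finset.sum_congr rfl fun i _ => by ring
    have e2 : ℓ * 0 = 0 := by ring
    rwa [e1, e2] at h
  refine ⟨hga, hgb, hgk, ?_, ?_, hgenus⟩
  · exact ((modA.add modB).trans h3').trans
      (((Nat.ModEq.mul_left 1 modA).mul modB).symm)
  · exact (((modA.add modB).add hsum).trans h4')
end

section
/- If D is an SP data set of genus g with m cone points (m ≥ 1), then: (a) n ≤ 4g; (b) if g₀ ≥ 1 then n < g (for g ≥ 5); (c) if n > 2g then m = 1. -/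
/-- For an SP data set of genus g with m ≥ 1: (a) n ≤ 4g; (b) if g₀ ≥ 1 and g ≥ 5 then
n < g; (c) if n > 2g then m = 1. -/
theorem sp_consequences
    (n g₀ g m : ℕ) (nn : Fin m → ℕ)
    (hn : 1 < n) (hm : 1 ≤ m)
    (hnn : ∀ i, 2 ≤ nn i ∧ nn i ≤ n)
    (hdvd : ∀ i, nn i ∣ n)
    (hgenus : 2 * g = 2 * g₀ * n + ∑ i, (n / nn i) * (nn i - 1)) :
    n ≤ 4 * g ∧ (1 ≤ g₀ → 5 ≤ g → n < g) ∧ (2 * g < n → m = 1) := by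
  have hterm : ∀ i : Fin m, n - n / 2 ≤ (n / nn i) * (nn i - 1) := by
    intro i
    obtain ⟨h2, _⟩ := hnn i
    have hd := hdvd i
    have hmc : (n / nn i) * nn i = n := Nat.div_mul_cancel hd
    have he : (n / nn i) * nn i = (n / nn i) * (nn i - 1) + n / nn i := by
      have := Nat.mul_succ (n / nn i) (nn i - 1)
      rw [Nat.succ_eq_add_one, Nat.sub_add_cancel (by omega : 1 ≤ nn i)] at this
      omega
    have ha : n / nn i ≤ n / 2 := Nat.div_le_div_left h2 (by norm_num)
    set a := n / nn i
    set t := a * (nn i - 1)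
    omega
  have hsum : m * (n - n / 2) ≤ ∑ i, (n / nn i) * (nn i - 1) := by
    calc m * (n - n / 2) = ∑ _i : Fin m, (n - n / 2) := by
          simp [Finset.sum_const, Finset.card_univ, mul_comm]
      _ ≤ ∑ i, (n / nn i) * (nn i - 1) :=
          Finset.sum_le_sum fun i _ => hterm i
  have h1 : n - n / 2 ≤ ∑ i, (n / nn i) * (nn i - 1) := by
    calc n - n / 2 = 1 * (n - n / 2) := (one_mul _).symm
      _ ≤ m * (n - n / 2) := Nat.mul_le_mul_right _ hm
      _ ≤ _ := hsum
  refine ⟨by omega, ?_, ?_⟩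
  · intro hg₀ _
    have h2n : 2 * n ≤ 2 * g₀ * n := by
      have : 2 * 1 * n ≤ 2 * g₀ * n := by
        exact Nat.mul_le_mul_right n (by omega)
      omega
    omega
  · intro hlt
    by_contra hne
    have hm2 : 2 ≤ m := by omega
    have : 2 * (n - n / 2) ≤ ∑ i, (n / nn i) * (nn i - 1) := by
      calc 2 * (n - n / 2) ≤ m * (n - n / 2) := Nat.mul_le_mul_right _ hm2
        _ ≤ _ := hsum
    omega
end

section
/- For every g ≥ 1, the tuple ((2g, 2g+1), 0, (1, g); (g, 2g+1)) is an SP data set of genus g and exponent (2g)⁄(2g+1); i.e., with n = 2g+1, a = 1, b = g, k₁ = g, n₁ = 2g+1: gcd(1, 2g+1) = gcd(g, 2g+1) = 1, 1 + g ≡ 2g·1·g (mod 2g+1), 1 + g + g ≡ 0 (mod 2g+1), and g = 0·(2g+1) + (1/2)·1·(2g+1−1). -/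
/-- For every g ≥ 1, the tuple ((2g, 2g+1), 0, (1, g); (g, 2g+1)) is an SP data set of
genus g and exponent (2g)⁄(2g+1). -/
theorem sp_data_set_exponent_2g_over_2g_add_one (g : ℕ) (hg : 1 ≤ g) :
    1 < 2 * g + 1 ∧ (2 * g + 1) ∣ (2 * g + 1) ∧
    Nat.gcd 1 (2 * g + 1) = 1 ∧ Nat.gcd g (2 * g + 1) = 1 ∧
    Nat.gcd g (2 * g + 1) = 1 ∧
    1 + g ≡ 2 * g * 1 * g [MOD 2 * g + 1] ∧
    1 + g + ((2 * g + 1) / (2 * g + 1)) * g ≡ 0 [MOD 2 * g + 1] ∧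
    2 * g = 2 * 0 * (2 * g + 1) + ((2 * g + 1) / (2 * g + 1)) * (2 * g + 1 - 1) := by
  have hgcd : Nat.gcd g (2 * g + 1) = 1 := by
    have : Nat.gcd g (2 * g + 1) = Nat.gcd g 1 := by
      conv_lhs => rw [show 2 * g + 1 = 1 + g * 2 by ring]
      rw [Nat.gcd_add_mul_left_right]
    simpa using this
  refine ⟨by omega, dvd_refl _, Nat.gcd_one_left _, hgcd, hgcd, ?_, ?_, by
    rw [Nat.div_self (by omega)]; omega⟩
  · show (1 + g) % (2 * g + 1) = (2 * g * 1 * g) % (2 * g + 1)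
    obtain ⟨n, rfl⟩ := Nat.exists_eq_add_of_le hg
    have h : 2 * (1 + n) * 1 * (1 + n) = n * (2 * (1 + n) + 1) + (1 + (1 + n)) := by ring
    rw [h, Nat.mul_comm n, Nat.mul_add_mod]
  · show (1 + g + ((2 * g + 1) / (2 * g + 1)) * g) % (2 * g + 1) = 0 % (2 * g + 1)
    rw [Nat.div_self (by omega)]
    rw [show 1 + g + 1 * g = 2 * g + 1 by ring, Nat.mod_self, Nat.zero_mod]
end

section
/- For every g ≥ 1, the tuple ((2g, 4g), 0, (1, 2g−1); (1, 2)) is an SP data set of genus g and exponent (2g)⁄(4g); in particular, side-preserving fractional powers of exponent (2g)⁄(4g) always exist and the upper bound n ≤ 4g is attained. -/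
/-- For every g ≥ 1, the tuple ((2g, 4g), 0, (1, 2g−1); (1, 2)) is an SP data set of
genus g and exponent (2g)⁄(4g); in particular n = 4g is attained. -/
theorem sp_data_set_exponent_2g_over_4g (g : ℕ) (hg : 1 ≤ g) :
    1 < 4 * g ∧ 1 < 2 ∧ 2 ∣ 4 * g ∧
    Nat.gcd 1 (4 * g) = 1 ∧ Nat.gcd (2 * g - 1) (4 * g) = 1 ∧
    Nat.gcd 1 2 = 1 ∧
    1 + (2 * g - 1) ≡ 2 * g * 1 * (2 * g - 1) [MOD 4 * g] ∧
    1 + (2 * g - 1) + (4 * g / 2) * 1 ≡ 0 [MOD 4 * g] ∧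
    2 * g = 2 * 0 * (4 * g) + (4 * g / 2) * (2 - 1) := by
  obtain ⟨k, rfl⟩ : ∃ k, g = k + 1 := ⟨g - 1, by omega⟩
  have hsub : 2 * (k + 1) - 1 = 2 * k + 1 := by omega
  refine ⟨by omega, by omega, ⟨2 * (k + 1), by ring⟩, Nat.gcd_one_left _, ?_, rfl, ?_, ?_, by omega⟩
  · rw [hsub]
    have h2 : Nat.gcd (2 * k + 1) 2 = 1 := by
      rw [Nat.gcd_comm, Nat.gcd_rec]
      have : (2 * k + 1) % 2 = 1 := by omega
      rw [this]
      rfl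
    have h4 : 4 * (k + 1) = 2 + 2 * (2 * k + 1) := by ring
    rw [h4]
    exact (Nat.coprime_add_mul_right_right _ _ _).mpr h2
  · show (1 + (2 * (k + 1) - 1)) % (4 * (k + 1)) = _ % _
    have h : 2 * (k + 1) * 1 * (2 * (k + 1) - 1)
        = (1 + (2 * (k + 1) - 1)) + 4 * (k + 1) * k := by
      rw [hsub]; ring
    rw [h, Nat.add_mul_mod_self_left]
  · have h : 1 + (2 * (k + 1) - 1) + (4 * (k + 1) / 2) * 1 = 4 * (k + 1) := by omega
    rw [h]
    exact (Nat.modEq_zero_iff_dvd).mpr dvd_rfl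
end

section
/- If D = ((ℓ,2n), g₀, a; (k₁,n₁),…,(k_m,n_m)) is an SE data set of genus g ≥ 1 with m ≥ 1 and (g₀, m) ≠ (0,1), then 2n ≥ (2g + m)/(2g₀ + m − 1). -/
/-- For an SE data set of genus g ≥ 1 with m ≥ 1 and (g₀, m) ≠ (0,1),
2n ≥ (2g + m)/(2g₀ + m − 1). -/
theorem se_lower_bound
    (n g₀ g m : ℕ) (nn : Fin m → ℕ)
    (hn : 2 ≤ n) (hg : 1 ≤ g) (hm : 1 ≤ m) (hne : ¬ (g₀ = 0 ∧ m = 1))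
    (hnn : ∀ i, 1 < nn i ∧ nn i ∣ 2 * n)
    (hgenus : -(g : ℚ) / (n : ℚ) =
      1 - 2 * (g₀ : ℚ) + ∑ i, (1 / (nn i : ℚ) - 1)) :
    ((2 * g + m : ℕ) : ℚ) / ((2 * g₀ + m : ℕ) - 1 : ℚ) ≤ 2 * (n : ℚ) := by
  have hnQ : (2:ℚ) ≤ (n:ℚ) := by exact_mod_cast hn
  have hn0 : (0:ℚ) < (n:ℚ) := by linarith
  have hne' : (n:ℚ) ≠ 0 := ne_of_gt hn0
  -- sum lower bound
  have hsum : (m:ℚ) * (1/(2*(n:ℚ))) ≤ ∑ i, (1/(nn i : ℚ)) := by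
    calc (m:ℚ) * (1/(2*(n:ℚ))) = ∑ _i : Fin m, (1/(2*(n:ℚ))) := by
          rw [Finset.sum_const, Finset.card_univ, Fintype.card_fin, nsmul_eq_mul]
      _ ≤ ∑ i, (1/(nn i : ℚ)) := by
          apply Finset.sum_le_sum
          intro i _
          have h1 := (hnn i).1
          have h2 : nn i ≤ 2 * n := Nat.le_of_dvd (by omega) (hnn i).2
          have hp : (0:ℚ) < (nn i : ℚ) := by exact_mod_cast Nat.lt_of_lt_of_le Nat.zero_lt_one h1.le
          have h2q : (nn i : ℚ) ≤ 2 * (n:ℚ) := by exact_mod_cast h2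
          exact one_div_le_one_div_of_le hp h2q
  have hS : ∑ i, (1/(nn i : ℚ)) = -(g:ℚ)/(n:ℚ) - 1 + 2*(g₀:ℚ) + (m:ℚ) := by
    rw [Finset.sum_sub_distrib, Finset.sum_const, Finset.card_univ, Fintype.card_fin,
      nsmul_eq_mul, mul_one] at hgenus
    linarith
  rw [hS] at hsum
  have hdiv : (-(g:ℚ)/(n:ℚ)) * (n:ℚ) = -(g:ℚ) := div_mul_cancel₀ _ hne'
  have hmain : (2*(g:ℚ) + (m:ℚ)) ≤ 2*(n:ℚ)*(2*(g₀:ℚ) + (m:ℚ) - 1) := by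
    have h := mul_le_mul_of_nonneg_right hsum (by linarith : (0:ℚ) ≤ 2*(n:ℚ))
    have hl : (m:ℚ) * (1/(2*(n:ℚ))) * (2*(n:ℚ)) = (m:ℚ) := by
      field_simp
    rw [hl] at h
    nlinarith [h, hdiv]
  have hden : 2 ≤ 2*g₀ + m := by omega
  have hdenQ : (0:ℚ) < ((2*g₀ + m : ℕ):ℚ) - 1 := by
    have : (2:ℚ) ≤ ((2*g₀ + m : ℕ):ℚ) := by exact_mod_cast hden
    linarith
  rw [div_le_iff₀ hdenQ]
  push_cast
  nlinarith [hmain]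
end

section
/- Let D = ((ℓ,2n), g₀, a; (k₁,n₁),…,(k_m,n_m)) be an SE data set of genus g with gcd(ℓ,n) = 1, ℓ composite, and let r be a divisor of ℓ with 1 < r < ℓ. Then the tuple D' obtained by replacing ℓ with ℓ/r and replacing a, k₁,…,k_m by ra (mod n), rk₁ (mod n₁),…, rk_m (mod n_m) is an SE data set of exponent (ℓ/r)⁄(2n) and genus g, provided gcd(r, 2n) = 1. -/
lemma modeq_sum {ι : Type*} (s : Finset ι) (f g : ι → ℕ) (n : ℕ)
    (h : ∀ i ∈ s, f i ≡ g i [MOD n]) : ∑ i ∈ s, f i ≡ ∑ i ∈ s, g i [MOD n] := by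
  classical
  induction s using Finset.induction_on with
  | empty => rfl
  | @insert a s hx ih =>
    rw [Finset.sum_insert hx, Finset.sum_insert hx]
    exact Nat.ModEq.add (h a (Finset.mem_insert_self a s))
      (ih fun i hi => h i (Finset.mem_insert_of_mem hi))

/-- An SE data set of composite exponent ℓ with gcd(ℓ,n) = 1 yields, for any divisor r
of ℓ with 1 < r < ℓ and gcd(r, 2n) = 1, an SE data set of exponent (ℓ/r)⁄(2n) and
genus g by replacing ℓ with ℓ/r and a, kᵢ by ra mod n, rkᵢ mod nᵢ. -/
theorem se_composite_power
    (ℓ n g₀ a g m : ℕ) (k nn : Fin m → ℕ)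
    (hℓ : 2 ≤ ℓ) (hn : 2 ≤ n)
    (hnn : ∀ i, 1 < nn i ∧ nn i ∣ 2 * n)
    (ha : Nat.gcd a n = 1)
    (hk : ∀ i, Nat.gcd (k i) (nn i) = 1)
    (h3 : ℓ * a ≡ 2 [MOD n])
    (h4 : 2 * a + ∑ i, (2 * n / nn i) * k i ≡ 0 [MOD 2 * n])
    (hgenus : (g : ℚ) = (n : ℚ) * (2 * (g₀ : ℚ) - 1) +
      ∑ i, ((n : ℚ) / (nn i : ℚ)) * ((nn i : ℚ) - 1))
    (hcop : Nat.gcd ℓ n = 1) (hcomp : ¬ Nat.Prime ℓ)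
    (r : ℕ) (hr : r ∣ ℓ) (hr1 : 1 < r) (hrℓ : r < ℓ) (hr2n : Nat.gcd r (2 * n) = 1) :
    2 ≤ ℓ / r ∧
    Nat.gcd (r * a % n) n = 1 ∧
    (∀ i, Nat.gcd (r * k i % nn i) (nn i) = 1) ∧
    (ℓ / r) * (r * a % n) ≡ 2 [MOD n] ∧
    2 * (r * a % n) + ∑ i, (2 * n / nn i) * (r * k i % nn i) ≡ 0 [MOD 2 * n] ∧
    (g : ℚ) = (n : ℚ) * (2 * (g₀ : ℚ) - 1) +
      ∑ i, ((n : ℚ) / (nn i : ℚ)) * ((nn i : ℚ) - 1) := by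
  have hrn : Nat.Coprime r n := Nat.Coprime.coprime_dvd_right (dvd_mul_left n 2) hr2n
  refine ⟨?_, ?_, ?_, ?_, ?_, hgenus⟩
  · -- 2 ≤ ℓ / r
    obtain ⟨c, rfl⟩ := hr
    rcases Nat.eq_zero_or_pos r with h | hrpos; · omega
    rw [Nat.mul_div_cancel_left c hrpos]
    nlinarith
  · -- gcd (r*a % n) n = 1
    rw [← Nat.gcd_rec]
    exact Nat.Coprime.symm (Nat.Coprime.mul hrn ha)
  · intro i
    have hrnn : Nat.Coprime r (nn i) :=
      Nat.Coprime.coprime_dvd_right (hnn i).2 hr2n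
    rw [← Nat.gcd_rec]
    exact Nat.Coprime.symm (Nat.Coprime.mul hrnn (hk i))
  · -- (ℓ/r) * (r*a % n) ≡ 2 [MOD n]
    calc (ℓ / r) * (r * a % n) ≡ (ℓ / r) * (r * a) [MOD n] :=
          Nat.ModEq.mul_left _ (Nat.mod_modEq _ _)
      _ = ℓ * a := by rw [← mul_assoc, Nat.div_mul_cancel hr]
      _ ≡ 2 [MOD n] := h3
  · -- mod 2n condition
    have h2 : 2 * (r * a % n) ≡ 2 * (r * a) [MOD 2 * n] :=
      Nat.ModEq.mul_left' 2 (Nat.mod_modEq _ _)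
    have hterm : ∀ i : Fin m, (2 * n / nn i) * (r * k i % nn i) ≡
        (2 * n / nn i) * (r * k i) [MOD 2 * n] := by
      intro i
      have := Nat.ModEq.mul_left' (2 * n / nn i) (Nat.mod_modEq (r * k i) (nn i))
      rwa [Nat.div_mul_cancel (hnn i).2] at this
    have hsum : ∑ i, (2 * n / nn i) * (r * k i % nn i) ≡
        ∑ i, (2 * n / nn i) * (r * k i) [MOD 2 * n] :=
      modeq_sum Finset.univ _ _ _ (fun i _ => hterm i)
    calc 2 * (r * a % n) + ∑ i, (2 * n / nn i) * (r * k i % nn i)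
        ≡ 2 * (r * a) + ∑ i, (2 * n / nn i) * (r * k i) [MOD 2 * n] :=
          Nat.ModEq.add h2 hsum
      _ = r * (2 * a + ∑ i, (2 * n / nn i) * k i) := by
          rw [mul_add, Finset.mul_sum]; ring_nf
      _ ≡ r * 0 [MOD 2 * n] := Nat.ModEq.mul_left r h4
      _ = 0 := by ring
end

section
/- For every g ≥ 1, the tuple ((4g+1, 4g+2), 0, 2g−1; (1,2), (2g+5, 4g+2)) is an SE data set of genus g and exponent (4g+1)⁄(4g+2). That is, with n = 2g+1: gcd(2g−1, 2g+1) = 1, gcd(2g+5, 4g+2) = 1, (4g+1)(2g−1) ≡ 2 (mod 2g+1), 2(2g−1) + (2g+1)·1 + 1·(2g+5) ≡ 0 (mod 4g+2), and g = (2g+1)(2·0 − 1) + ((2g+1)/2)(2−1) + ((2g+1)/(4g+2))(4g+1). -/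
lemma coprime_aux (a b : ℕ) (h : IsCoprime (a : ℤ) (b : ℤ)) : Nat.gcd a b = 1 :=
  Nat.isCoprime_iff_coprime.mp h

/-- For every g ≥ 1, the tuple ((4g+1, 4g+2), 0, 2g−1; (1,2), (2g+5, 4g+2)) is an SE
data set of genus g and exponent (4g+1)⁄(4g+2). -/
theorem se_data_set_exponent_4g_add_one (g : ℕ) (hg : 1 ≤ g) :
    2 ≤ 4 * g + 1 ∧ 2 ≤ 2 * g + 1 ∧
    1 < 2 ∧ 2 ∣ 4 * g + 2 ∧ 1 < 4 * g + 2 ∧ (4 * g + 2) ∣ (4 * g + 2) ∧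
    Nat.gcd (2 * g - 1) (2 * g + 1) = 1 ∧
    Nat.gcd 1 2 = 1 ∧ Nat.gcd (2 * g + 5) (4 * g + 2) = 1 ∧
    (4 * g + 1) * (2 * g - 1) ≡ 2 [MOD 2 * g + 1] ∧
    2 * (2 * g - 1) + ((4 * g + 2) / 2) * 1 + ((4 * g + 2) / (4 * g + 2)) * (2 * g + 5)
      ≡ 0 [MOD 4 * g + 2] ∧
    (g : ℚ) = ((2 * g + 1 : ℕ) : ℚ) * (2 * 0 - 1) +
      ((2 * g + 1 : ℕ) : ℚ) / 2 * (2 - 1) +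
      ((2 * g + 1 : ℕ) : ℚ) / ((4 * g + 2 : ℕ) : ℚ) * ((4 * g + 2 : ℕ) - 1 : ℚ) := by
  obtain ⟨k, rfl⟩ : ∃ k, g = k + 1 := ⟨g - 1, by omega⟩
  refine ⟨by omega, by omega, by omega, ⟨2 * (k + 1) + 1, by ring⟩, by omega, dvd_refl _,
    ?_, rfl, ?_, ?_, ?_, ?_⟩
  · apply coprime_aux
    rw [show 2 * (k + 1) - 1 = 2 * k + 1 from by omega]
    refine ⟨-((k:ℤ) + 2), (k:ℤ) + 1, ?_⟩
    push_cast
    ring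
  · rw [show 4 * (k + 1) + 2 = 2 * (2 * (k + 1) + 1) from by ring]
    apply Nat.Coprime.mul_right
    · exact coprime_aux _ _ ⟨1, -((k:ℤ) + 3), by push_cast; ring⟩
    · refine coprime_aux _ _ ⟨-(((k:ℤ) + 1)^2 + (k + 1)),
        ((k:ℤ) + 1)^2 + 3 * (k + 1) + 1, ?_⟩
      push_cast
      ring
  · have h1 : 2 * (k + 1) - 1 = 2 * k + 1 := by omega
    rw [h1]
    have h2 : (4 * (k + 1) + 1) * (2 * k + 1) = 2 + (2 * (k + 1) + 1) * (4 * k + 1) := by ring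
    rw [h2]
    exact (Nat.modEq_iff_dvd' (by omega)).mpr ⟨4 * k + 1, by omega⟩ |>.symm
  · have h1 : 2 * (2 * (k + 1) - 1) + ((4 * (k + 1) + 2) / 2) * 1
        + ((4 * (k + 1) + 2) / (4 * (k + 1) + 2)) * (2 * (k + 1) + 5)
        = 2 * (4 * (k + 1) + 2) := by
      rw [Nat.div_self (show 0 < 4 * (k + 1) + 2 by omega)]
      omega
    rw [h1]
    simpa using (Nat.modEq_zero_iff_dvd).mpr ⟨2, by ring⟩
  · have h1 : ((4 * (k + 1) + 2 : ℕ) : ℚ) ≠ 0 := by positivity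
    push_cast
    field_simp
    ring
end

section
/- For every g ≥ 1, the tuple ((2, 2g+2), 0, 1; (2g+1, 2g+2), (2g+1, 2g+2)) is an SE data set of genus g and exponent 2⁄(2g+2). That is, with n = g+1, a = 1, k₁ = k₂ = 2g+1, n₁ = n₂ = 2g+2: gcd(1, g+1) = 1, gcd(2g+1, 2g+2) = 1, 2·1 ≡ 2 (mod g+1), 2·1 + 1·(2g+1) + 1·(2g+1) ≡ 0 (mod 2g+2), and g = (g+1)(−1) + 2·((g+1)/(2g+2))(2g+1). -/
/-- For every g ≥ 1, the tuple ((2, 2g+2), 0, 1; (2g+1, 2g+2), (2g+1, 2g+2)) is an SE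
data set of genus g and exponent 2⁄(2g+2). -/
theorem se_data_set_exponent_two (g : ℕ) (hg : 1 ≤ g) :
    2 ≤ g + 1 ∧ 1 < 2 * g + 2 ∧ (2 * g + 2) ∣ (2 * g + 2) ∧
    Nat.gcd 1 (g + 1) = 1 ∧ Nat.gcd (2 * g + 1) (2 * g + 2) = 1 ∧
    2 * 1 ≡ 2 [MOD g + 1] ∧
    2 * 1 + ((2 * g + 2) / (2 * g + 2)) * (2 * g + 1) +
      ((2 * g + 2) / (2 * g + 2)) * (2 * g + 1) ≡ 0 [MOD 2 * g + 2] ∧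
    (g : ℚ) = ((g + 1 : ℕ) : ℚ) * (-1) +
      2 * (((g + 1 : ℕ) : ℚ) / ((2 * g + 2 : ℕ) : ℚ)) * ((2 * g + 1 : ℕ) : ℚ) := by
  refine ⟨by omega, by omega, dvd_rfl, Nat.gcd_one_left _,
    Nat.coprime_self_add_right.mpr (Nat.coprime_one_right _), rfl, ?_, ?_⟩
  · rw [Nat.div_self (by omega)]
    exact Nat.modEq_zero_iff_dvd.mpr ⟨2, by ring⟩
  · push_cast
    field_simp
    ring
end

section
/- If D = ((ℓ,n), g₀, (a,b); (k₁,n₁)) is an SP data set of genus g with g₀ = 0, m = 1, and gcd(ℓ,n) = 1, then n₁ = n. Equivalently: if n₁ properly divides n, setting d = n/n₁ > 1, the conditions a + b + (n/n₁)k₁ ≡ 0 (mod n) and a + b ≡ ℓab (mod n) with gcd(a,n) = gcd(b,n) = gcd(ℓ,n) = 1 lead to a contradiction. -/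
/-- For an SP data set with g₀ = 0, m = 1 and gcd(ℓ,n) = 1, one has n₁ = n. -/
theorem sp_m_one_cone_order_eq_n
    (ℓ n a b k₁ n₁ : ℕ)
    (hn : 1 < n) (hn₁ : 1 < n₁) (hdvd : n₁ ∣ n)
    (ha : Nat.gcd a n = 1) (hb : Nat.gcd b n = 1)
    (hℓ : Nat.gcd ℓ n = 1) (hk : Nat.gcd k₁ n₁ = 1)
    (h3 : a + b ≡ ℓ * a * b [MOD n])
    (h4 : a + b + (n / n₁) * k₁ ≡ 0 [MOD n]) :
    n₁ = n := by
  set d := n / n₁ with hd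
  have hdn : d ∣ n := Nat.div_dvd_of_dvd hdvd
  have h4' : n ∣ a + b + d * k₁ := Nat.modEq_zero_iff_dvd.mp h4
  have hsum : d ∣ a + b + d * k₁ := dvd_trans hdn h4'
  have hdab : d ∣ a + b := by
    have := Nat.dvd_sub hsum (dvd_mul_right d k₁)
    simpa using this
  have hmod : a + b ≡ ℓ * a * b [MOD d] := Nat.ModEq.of_dvd hdn h3
  have hz : a + b ≡ 0 [MOD d] := Nat.modEq_zero_iff_dvd.mpr hdab
  have hdlab : d ∣ ℓ * a * b := Nat.modEq_zero_iff_dvd.mp (hmod.symm.trans hz)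
  have hcop : Nat.Coprime (ℓ * a * b) n := (Nat.Coprime.mul hℓ ha).mul hb
  have hd1 : d = 1 := Nat.dvd_one.mp (hcop ▸ Nat.dvd_gcd hdlab hdn)
  have h := Nat.mul_div_cancel' hdvd
  rw [← hd, hd1] at h
  omega
end
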